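/- Let N, m, n be positive integers, let W = (w_{ij}) ∈ ℝ^{N×N} be doubly stochastic with mixing rate λ := ‖W − 1_N1_Nᵀ/N‖ < 1, and let η > 0. Suppose that matrices X_i^k ∈ ℝ^{m×n} and D_i^k ∈ ℝ^{m×n} (i = 1,…,N, k = 0,1,2,…) satisfy ‖D_i^k‖ ≤ 1 for all i and k, X_i^{k+1} = ∑_{j=1}^N w_{ij}(X_j^k − η D_j^k) for all i and k, and X_i^0 = X_j^0 for all i, j. Then for every k ≥ 0, ‖X_{[N]}^k − 1_N ⊗ X̄^k‖ ≤ √N λ η / (1 − λ), where X_{[N]}^k is the vertical stacking of X_1^k,…,X_N^k, X̄^k is their average, and the norm on the left is the spectral norm of the (Nm)×n stacked matrix. -/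

import Mathlib

/-!
Because `W` is doubly stochastic, the deviations `Eₖ = X_[N]ᵏ - 𝟙 ⊗ X̄ᵏ` satisfy
`Eₖ₊₁ = ((W - 𝟙𝟙ᵀ/N) ⊗ Iₘ) (Eₖ - η D_[N]ᵏ)`. Stacking `N` blocks of norm at most `1` gives norm at
most `√N`, so `‖Eₖ₊₁‖ ≤ λ (‖Eₖ‖ + √N η)`; starting from `E₀ = 0` the error therefore never exceeds
the fixed point `√N λ η / (1 - λ)` of this recursion.
-/

open Matrix Kronecker

/-- Spectral norm: ℓ²→ℓ² operator norm of a real matrix. -/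
noncomputable def specNorm {ι κ : Type*} [Fintype ι] [Fintype κ] [DecidableEq κ]
    (A : Matrix ι κ ℝ) : ℝ :=
  ‖LinearMap.toContinuousLinearMap (Matrix.toEuclideanLin A)‖

/-- The positive semidefinite square root (as defined in Mathlib of December 2024). -/
noncomputable def Matrix.PosSemidef.sqrt {n 𝕜 : Type*} [Fintype n] [DecidableEq n] [RCLike 𝕜]
    [PartialOrder 𝕜]     {A : Matrix n n 𝕜} (hA : A.PosSemidef) : Matrix n n 𝕜 :=
  hA.1.eigenvectorUnitary.1 * diagonal ((↑) ∘ (√·) ∘ hA.1.eigenvalues) *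
    (star hA.1.eigenvectorUnitary : Matrix n n 𝕜)

/-- Nuclear norm: trace of the positive semidefinite square root of `Aᵀ * A`. -/
noncomputable def nucNorm {ι κ : Type*} [Fintype ι] [Fintype κ] [DecidableEq κ]
    (A : Matrix ι κ ℝ) : ℝ :=
  Matrix.trace (Matrix.posSemidef_conjTranspose_mul_self A).sqrt

/-- Frobenius norm. -/
noncomputable def frobNorm {ι κ : Type*} [Fintype ι] [Fintype κ] (A : Matrix ι κ ℝ) : ℝ :=
  Real.sqrt (∑ i, ∑ j, (A i j) ^ 2)

/-- Trace inner product `⟨A, B⟩ = trace (Aᵀ B)`. -/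
noncomputable def tin {ι κ : Type*} [Fintype ι] [Fintype κ] (A B : Matrix ι κ ℝ) : ℝ :=
  Matrix.trace (Aᵀ * B)

/-- Vertical stacking of `N` matrices of size `m × n`. -/
def vstack {N m n : ℕ} (Y : Fin N → Matrix (Fin m) (Fin n) ℝ) :
    Matrix (Fin N × Fin m) (Fin n) ℝ :=
  fun p j => Y p.1 p.2 j

open scoped Matrix.Norms.L2Operator

section L2OpNorm

variable {ι κ : Type*} [Fintype ι] [Fintype κ] [DecidableEq κ]

theorem specNorm_eq_l2_opNorm (A : Matrix ι κ ℝ) : specNorm A = ‖A‖ := rfl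

theorem Matrix.sum_sq_mulVec_le (A : Matrix ι κ ℝ) (x : κ → ℝ) :
    ∑ i, (A *ᵥ x) i ^ 2 ≤ ‖A‖ ^ 2 * ∑ j, x j ^ 2 := by
  have h := A.l2_opNorm_mulVec (WithLp.toLp 2 x)
  simp only [PiLp.continuousLinearEquiv_symm_apply, EuclideanSpace.norm_eq, Real.norm_eq_abs,
    sq_abs] at h
  rwa [← Real.sqrt_sq (norm_nonneg A), ← Real.sqrt_mul (sq_nonneg _),
    Real.sqrt_le_sqrt_iff (by positivity)] at h

theorem Matrix.l2_opNorm_le_of_sum_sq_mulVec_le {A : Matrix ι κ ℝ} {c : ℝ} (hc : 0 ≤ c)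
    (h : ∀ x : κ → ℝ, ∑ i, (A *ᵥ x) i ^ 2 ≤ c ^ 2 * ∑ j, x j ^ 2) : ‖A‖ ≤ c := by
  refine ContinuousLinearMap.opNorm_le_bound _ hc fun x => ?_
  simp only [EuclideanSpace.norm_eq, Real.norm_eq_abs, sq_abs]
  rw [← Real.sqrt_sq hc, ← Real.sqrt_mul (sq_nonneg _)]
  exact Real.sqrt_le_sqrt (h x.ofLp)

end L2OpNorm

section Mixing

variable {E : Type*} [AddCommGroup E] [Module ℝ E] {N : ℕ}

noncomputable def mean (Y : Fin N → E) : E := (N : ℝ)⁻¹ • ∑ i, Y i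

noncomputable def mixingDeviation (W : Matrix (Fin N) (Fin N) ℝ) : Matrix (Fin N) (Fin N) ℝ :=
  W - (N : ℝ)⁻¹ • Matrix.of fun _ _ => 1

theorem mean_eq_of_forall_eq {Y : Fin N → E} (h : ∀ i j, Y i = Y j) (i : Fin N) :
    mean Y = Y i := by
  have hN : (N : ℝ) ≠ 0 := Nat.cast_ne_zero.mpr i.pos.ne'
  simp only [mean, h _ i, Finset.sum_const, Finset.card_univ, Fintype.card_fin,
    ← Nat.cast_smul_eq_nsmul ℝ, smul_smul, inv_mul_cancel₀ hN, one_smul]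

theorem sum_mixingDeviation_row {W : Matrix (Fin N) (Fin N) ℝ} (hrow : ∀ i, ∑ j, W i j = 1)
    (i : Fin N) : ∑ j, mixingDeviation W i j = 0 := by
  have hN : (N : ℝ) ≠ 0 := Nat.cast_ne_zero.mpr i.pos.ne'
  simp [mixingDeviation, Finset.sum_sub_distrib, hrow, hN]

theorem mean_mix {W : Matrix (Fin N) (Fin N) ℝ} (hcol : ∀ j, ∑ i, W i j = 1) (Y : Fin N → E) :
    mean (fun i => ∑ j, W i j • Y j) = mean Y := by
  simp only [mean, Finset.sum_comm (γ := Fin N), ← Finset.sum_smul, hcol, one_smul]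

theorem mix_sub_mean_mix {W : Matrix (Fin N) (Fin N) ℝ} (hrow : ∀ i, ∑ j, W i j = 1)
    (hcol : ∀ j, ∑ i, W i j = 1) (Y : Fin N → E) (c : E) (i : Fin N) :
    ∑ j, W i j • Y j - mean (fun i => ∑ j, W i j • Y j)
      = ∑ j, mixingDeviation W i j • (Y j - c) := by
  simp only [smul_sub, Finset.sum_sub_distrib, ← Finset.sum_smul,
    sum_mixingDeviation_row hrow i, zero_smul, sub_zero, mean_mix hcol]
  simp [mixingDeviation, sub_smul, Finset.sum_sub_distrib, mean, Finset.smul_sum]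

end Mixing

section Vstack

variable {N m n : ℕ}

theorem sum_sq_vstack_mulVec (Y : Fin N → Matrix (Fin m) (Fin n) ℝ) (x : Fin n → ℝ) :
    ∑ p, (vstack Y *ᵥ x) p ^ 2 = ∑ i, ∑ s, (Y i *ᵥ x) s ^ 2 :=
  Fintype.sum_prod_type _

theorem norm_vstack_le {Y : Fin N → Matrix (Fin m) (Fin n) ℝ} {c : ℝ} (hc : 0 ≤ c)
    (h : ∀ i, ‖Y i‖ ≤ c) : ‖vstack Y‖ ≤ √N * c := by
  refine l2_opNorm_le_of_sum_sq_mulVec_le (by positivity) fun x => ?_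
  calc ∑ p, (vstack Y *ᵥ x) p ^ 2 = ∑ i, ∑ s, (Y i *ᵥ x) s ^ 2 := sum_sq_vstack_mulVec Y x
    _ ≤ ∑ _i : Fin N, c ^ 2 * ∑ j, x j ^ 2 := by
      gcongr with i
      exact (sum_sq_mulVec_le _ x).trans (by gcongr; exact h i)
    _ = (√N * c) ^ 2 * ∑ j, x j ^ 2 := by
      rw [Finset.sum_const, Finset.card_univ, Fintype.card_fin, nsmul_eq_mul, mul_pow,
        Real.sq_sqrt N.cast_nonneg, mul_assoc]

theorem sum_smul_mulVec_apply (M : Matrix (Fin N) (Fin N) ℝ)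
    (Y : Fin N → Matrix (Fin m) (Fin n) ℝ) (x : Fin n → ℝ) (i : Fin N) (s : Fin m) :
    ((∑ j, M i j • Y j) *ᵥ x) s = (M *ᵥ fun j => (Y j *ᵥ x) s) i := by
  rw [Matrix.sum_mulVec]
  simp [Matrix.smul_mulVec, mulVec, dotProduct]

theorem norm_vstack_sum_smul_le (M : Matrix (Fin N) (Fin N) ℝ)
    (Y : Fin N → Matrix (Fin m) (Fin n) ℝ) :
    ‖vstack (fun i => ∑ j, M i j • Y j)‖ ≤ ‖M‖ * ‖vstack Y‖ := by
  refine l2_opNorm_le_of_sum_sq_mulVec_le (by positivity) fun x => ?_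
  calc ∑ p, (vstack (fun i => ∑ j, M i j • Y j) *ᵥ x) p ^ 2
      = ∑ s, ∑ i, (M *ᵥ fun j => (Y j *ᵥ x) s) i ^ 2 := by
        rw [sum_sq_vstack_mulVec, Finset.sum_comm]
        simp only [sum_smul_mulVec_apply]
    _ ≤ ∑ s, ‖M‖ ^ 2 * ∑ j, (Y j *ᵥ x) s ^ 2 :=
        Finset.sum_le_sum fun s _ => sum_sq_mulVec_le _ _
    _ = ‖M‖ ^ 2 * ∑ p, (vstack Y *ᵥ x) p ^ 2 := by
        rw [← Finset.mul_sum, sum_sq_vstack_mulVec, Finset.sum_comm]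
    _ ≤ ‖M‖ ^ 2 * (‖vstack Y‖ ^ 2 * ∑ j, x j ^ 2) := by
        gcongr
        exact sum_sq_mulVec_le _ x
    _ = (‖M‖ * ‖vstack Y‖) ^ 2 * ∑ j, x j ^ 2 := by ring

end Vstack

theorem norm_vstack_mix_sub_mean_le {N m n : ℕ} {W : Matrix (Fin N) (Fin N) ℝ}
    (hrow : ∀ i, ∑ j, W i j = 1) (hcol : ∀ j, ∑ i, W i j = 1) {η : ℝ} (hη : 0 ≤ η)
    (X D : Fin N → Matrix (Fin m) (Fin n) ℝ) (hD : ∀ i, ‖D i‖ ≤ 1) :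
    ‖vstack (fun i => ∑ j, W i j • (X j - η • D j) - mean (fun i => ∑ j, W i j • (X j - η • D j)))‖
      ≤ ‖mixingDeviation W‖ * (‖vstack (fun i => X i - mean X)‖ + √N * η) := by
  have hsplit : vstack (fun j => X j - η • D j - mean X)
      = vstack (fun i => X i - mean X) - η • vstack D := by
    ext p j
    simp [vstack, sub_right_comm]
  calc _ = ‖vstack (fun i => ∑ j, mixingDeviation W i j • (X j - η • D j - mean X))‖ := by
        simp only [mix_sub_mean_mix hrow hcol _ (mean X)]
    _ ≤ ‖mixingDeviation W‖ * ‖vstack (fun j => X j - η • D j - mean X)‖ :=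
        norm_vstack_sum_smul_le _ _
    _ ≤ ‖mixingDeviation W‖ * (‖vstack (fun i => X i - mean X)‖ + √N * η) := by
        rw [hsplit]
        gcongr
        refine (norm_sub_le _ _).trans ?_
        rw [norm_smul, Real.norm_of_nonneg hη, mul_comm η]
        gcongr
        simpa using norm_vstack_le zero_le_one hD

theorem le_mul_div_one_sub_of_le_mul_add {e : ℕ → ℝ} {a b : ℝ} (ha₀ : 0 ≤ a) (ha₁ : a < 1)
    (h₀ : e 0 ≤ a * b / (1 - a)) (hstep : ∀ k, e (k + 1) ≤ a * (e k + b)) (k : ℕ) :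
    e k ≤ a * b / (1 - a) := by
  induction k with
  | zero => exact h₀
  | succ k ih =>
    calc e (k + 1) ≤ a * (a * b / (1 - a) + b) := (hstep k).trans (by gcongr)
      _ = a * b / (1 - a) := by
        field_simp [(sub_pos.2 ha₁).ne']
        ring

theorem stmt0_general (N m n : ℕ)
    (W : Matrix (Fin N) (Fin N) ℝ)
    (hrow : ∀ i, ∑ j, W i j = 1) (hcol : ∀ j, ∑ i, W i j = 1)
    (lam : ℝ)
    (hlam : lam = specNorm (W - (N : ℝ)⁻¹ • Matrix.of (fun _ _ => (1 : ℝ))))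
    (hlt : lam < 1)
    (η : ℝ) (hη : 0 < η)
    (X D : ℕ → Fin N → Matrix (Fin m) (Fin n) ℝ)
    (hD : ∀ k i, specNorm (D k i) ≤ 1)
    (hrec : ∀ k i, X (k + 1) i = ∑ j, W i j • (X k j - η • D k j))
    (hinit : ∀ i j, X 0 i = X 0 j) :
    ∀ k, specNorm (vstack (X k) - vstack (fun _ => (N : ℝ)⁻¹ • ∑ i, X k i))
      ≤ Real.sqrt N * lam * η / (1 - lam) := by
  change lam = ‖mixingDeviation W‖ at hlam
  simp only [specNorm_eq_l2_opNorm] at hD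
  have hlam₀ : 0 ≤ lam := hlam ▸ norm_nonneg _
  have hstart : vstack (fun i => X 0 i - mean (X 0)) = 0 := by
    ext p j
    simp [vstack, mean_eq_of_forall_eq hinit p.1]
  intro k
  change ‖vstack (fun i => X k i - mean (X k))‖ ≤ _
  calc _ ≤ lam * (√N * η) / (1 - lam) := by
        refine le_mul_div_one_sub_of_le_mul_add
          (e := fun k => ‖vstack (fun i => X k i - mean (X k))‖) hlam₀ hlt ?_ (fun k => ?_) k
        · have := sub_pos.2 hlt
          rw [hstart, norm_zero]
          positivity
        · rw [hlam, funext (hrec k)]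
          exact norm_vstack_mix_sub_mean_le hrow hcol hη.le (X k) (D k) (hD k)
    _ = √N * lam * η / (1 - lam) := by ring

/-- Consensus error of the DeMuon iterate recursion (Lemma: consensus error). -/
theorem stmt0 (N m n : ℕ) (hN : 0 < N) (hm : 0 < m) (hn : 0 < n)
    (W : Matrix (Fin N) (Fin N) ℝ)
    (hrow : ∀ i, ∑ j, W i j = 1) (hcol : ∀ j, ∑ i, W i j = 1)
    (lam : ℝ)
    (hlam : lam = specNorm (W - (N : ℝ)⁻¹ • Matrix.of (fun _ _ => (1 : ℝ))))
    (hlt : lam < 1)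
    (η : ℝ) (hη : 0 < η)
    (X D : ℕ → Fin N → Matrix (Fin m) (Fin n) ℝ)
    (hD : ∀ k i, specNorm (D k i) ≤ 1)
    (hrec : ∀ k i, X (k + 1) i = ∑ j, W i j • (X k j - η • D k j))
    (hinit : ∀ i j, X 0 i = X 0 j) :
    ∀ k, specNorm (vstack (X k) - vstack (fun _ => (N : ℝ)⁻¹ • ∑ i, X k i))
      ≤ Real.sqrt N * lam * η / (1 - lam) :=
  stmt0_general N m n W hrow hcol lam hlam hlt η hη X D hD hrec hinit
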